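/- arXiv:0804.2841 — 3 statements merged into one kernel-verified Lean document; each statement's English description precedes it below -/
import Mathlib

section
/- Let X be a compact metrizable topological space and let α be an ordinal with D^{α+1}(X) = D^α(X). Then either D^α(X) is empty or D^α(X) has cardinality exactly 2^{ℵ₀}. -/
/-! A stable derived set `D^α(X) = D(D^α(X))` is closed and has no isolated points, i.e. it is a
perfect set. In a complete metric space a nonempty perfect set contains a copy of the Cantor space
`ℕ → Bool`, so it has at least `𝔠` points; and a second countable T₀ space has at most `𝔠` points,
since each point is determined by the set of basic open sets containing it. -/

universe u

/-- `cbD A` is the set of points of `A` that are accumulation points of `A`,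
i.e. the non-isolated points of the subspace `A`. -/
def cbD {X : Type u} [TopologicalSpace X] (A : Set X) : Set X :=
  A ∩ derivedSet A

/-- Transfinite iterates of the derived-set operator:
`cbIter A 0 = A`, `cbIter A (α+1) = cbD (cbIter A α)`, and
`cbIter A α = ⋂_{β<α} cbIter A β` at limit ordinals. -/
noncomputable def cbIter {X : Type u} [TopologicalSpace X] (A : Set X) (o : Ordinal.{u}) :
    Set X :=
  Ordinal.limitRecOn o A (fun _ ih => cbD ih)
    (fun o _ ih => ⋂ (b : Ordinal.{u}) (h : b < o), ih b h)

open Cardinal Set TopologicalSpace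

lemma cbIter_succ {X : Type u} [TopologicalSpace X] (A : Set X) (o : Ordinal.{u}) :
    cbIter A (o + 1) = cbD (cbIter A o) := by
  simp [cbIter, Ordinal.limitRecOn_add_one]

lemma cbIter_isClosed {X : Type u} [TopologicalSpace X] [T1Space X] {A : Set X}
    (hA : IsClosed A) (o : Ordinal.{u}) : IsClosed (cbIter A o) := by
  induction o using Ordinal.limitRecOn with
  | zero => simpa [cbIter] using hA
  | add_one o ih =>
    rw [cbIter_succ]
    exact ih.inter (isClosed_derivedSet _)
  | limit o ho ih =>
    rw [cbIter, Ordinal.limitRecOn_limit _ _ _ _ ho]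
    exact isClosed_iInter fun b => isClosed_iInter fun hb => ih b hb

lemma perfect_of_cbD_eq_self {X : Type u} [TopologicalSpace X] {A : Set X} (hA : IsClosed A)
    (h : cbD A = A) : Perfect A :=
  ⟨hA, fun _ hx => (h.symm ▸ hx : _ ∈ cbD A).2⟩

lemma Perfect.continuum_le_mk {α : Type u} [MetricSpace α] [CompleteSpace α] {C : Set α}
    (hC : Perfect C) (hne : C.Nonempty) : 𝔠 ≤ #C := by
  obtain ⟨f, hrange, -, hinj⟩ := hC.exists_nat_bool_injection hne
  have hinjC : Function.Injective (codRestrict f C fun x => hrange (mem_range_self x)) :=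
    (injective_codRestrict _).2 hinj
  simpa using lift_mk_le_lift_mk_of_injective hinjC

lemma mk_le_continuum_of_secondCountableTopology (X : Type u) [TopologicalSpace X]
    [SecondCountableTopology X] [T0Space X] : #X ≤ 𝔠 := by
  let b := countableBasis X
  have hinj : Function.Injective fun x : X => {s : b | x ∈ (s : Set X)} := by
    intro x y hxy
    refine inseparable_iff_eq.1 <| (isBasis_countableBasis X).inseparable_iff.2 fun s hs => ?_
    exact Set.ext_iff.1 hxy ⟨s, hs⟩
  calc #X ≤ #(Set b) := mk_le_of_injective hinj
    _ = 2 ^ #b := mk_set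
    _ ≤ 2 ^ ℵ₀ := power_le_power_left two_ne_zero (countable_countableBasis X).le_aleph0
    _ = 𝔠 := two_power_aleph0

/-- If `X` is a compact metrizable space and `α` is an ordinal with
`D^{α+1}(X) = D^α(X)`, then `D^α(X)` is empty or has cardinality `2^ℵ₀`. -/
theorem stable_derived_set_empty_or_continuum (X : Type u) [TopologicalSpace X]
    [CompactSpace X] [TopologicalSpace.MetrizableSpace X] (α : Ordinal.{u})
    (h : cbIter (Set.univ : Set X) (α + 1) = cbIter (Set.univ : Set X) α) :
    cbIter (Set.univ : Set X) α = ∅ ∨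
      Cardinal.mk ↥(cbIter (Set.univ : Set X) α) = Cardinal.continuum.{u} := by
  let := metrizableSpaceMetric X
  have hperfect : Perfect (cbIter (univ : Set X) α) :=
    perfect_of_cbD_eq_self (cbIter_isClosed isClosed_univ α) (by rw [← cbIter_succ, h])
  refine (eq_empty_or_nonempty _).imp id fun hne => ?_
  exact le_antisymm (mk_le_continuum_of_secondCountableTopology _) (hperfect.continuum_le_mk hne)
end

section
/- If X is a countable compact Hausdorff topological space, then there exists an ordinal α with D^α(X) = ∅; consequently every point x ∈ X has a well-defined Cantor–Bendixson rank, i.e., there is a unique ordinal β with x ∈ D^β(X) \ D^{β+1}(X). -/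
/-!
The derived-set iteration stabilises (there are more ordinals than subsets of `X`), and its
stable value, the perfect kernel, is a perfect set. A nonempty perfect set in a countable
locally compact Hausdorff space is impossible: as a closed subspace it is a countable Baire
space, so one of its singletons has nonempty interior, i.e. it has an isolated point. Hence
some iterate is empty, and the rank of `x` is the ordinal `b` at which `x` drops out: the first
stage missing `x` can be neither `0` nor a limit.
-/

universe u

open CantorBendixson

theorem cbIter_eq_iteratedDerivedSet {X : Type u} [TopologicalSpace X] (A : Set X)
    (o : Ordinal.{u}) : cbIter A o = Aᵈ[o] := by
  induction o using Ordinal.limitRecOn with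
  | zero => exact (Ordinal.limitRecOn_zero _ _ _).trans iteratedDerivedSet_zero.symm
  | add_one o ih =>
    rw [iteratedDerivedSet_succ, relDerivedSet_apply, Set.inter_comm, ← ih, ← cbD,
      cbIter, Ordinal.limitRecOn_add_one]
    rfl
  | limit o ho ih =>
    rw [iteratedDerivedSet_limit ho, cbIter, Ordinal.limitRecOn_limit _ _ _ _ ho,
      Set.iInter_subtype]
    exact Set.iInter₂_congr ih

theorem exists_isOpen_singleton_of_countable (X : Type*) [TopologicalSpace X] [BaireSpace X]
    [T1Space X] [Countable X] [Nonempty X] : ∃ x : X, IsOpen ({x} : Set X) := by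
  obtain ⟨x, hx⟩ := nonempty_interior_of_iUnion_of_closed (f := fun x : X => ({x} : Set X))
    (fun _ => isClosed_singleton) (Set.iUnion_of_singleton X)
  refine ⟨x, ?_⟩
  rw [← (hx.subset_singleton_iff).mp interior_subset]
  exact isOpen_interior

theorem Perfect.eq_empty_of_countable {X : Type*} [TopologicalSpace X] [T2Space X]
    [LocallyCompactSpace X] [Countable X] {C : Set X} (hC : Perfect C) : C = ∅ := by
  by_contra hne
  have : Nonempty C := (Set.nonempty_iff_ne_empty.mpr hne).to_subtype
  have : LocallyCompactSpace C := hC.closed.locallyCompactSpace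
  obtain ⟨x, hx⟩ := exists_isOpen_singleton_of_countable C
  obtain ⟨U, hU, hUx⟩ := isOpen_induced_iff.mp hx
  have hxU : x ∈ Subtype.val ⁻¹' U := hUx.symm ▸ rfl
  obtain ⟨y, ⟨hyU, hyC⟩, hyx⟩ := preperfect_iff_nhds.mp hC.acc x x.2 U (hU.mem_nhds hxU)
  have : (⟨y, hyC⟩ : C) ∈ Subtype.val ⁻¹' U := hyU
  rw [hUx] at this
  exact hyx (congrArg Subtype.val this)

namespace CantorBendixson

variable {X : Type u} [TopologicalSpace X] {s : Set X}

theorem exists_iteratedDerivedSet_eq_empty [T2Space X] [LocallyCompactSpace X] [Countable X]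
    (hs : IsClosed s) : ∃ a : Ordinal.{u}, sᵈ[a] = ∅ := by
  obtain ⟨a, ha⟩ := iteratedDerivedSet_mem_fixedPoints s
  exact ⟨a, perfectKernel_eq_iteratedDerivedSet_of_mem_fixedPoints ha ▸
    (perfect_perfectKernel hs).eq_empty_of_countable⟩

theorem exists_mem_diff_iteratedDerivedSet_succ {x : X} {a : Ordinal.{u}} (hxs : x ∈ s)
    (hxa : x ∉ sᵈ[a]) : ∃ b : Ordinal.{u}, x ∈ sᵈ[b] \ sᵈ[b + 1] := by
  induction a using Ordinal.limitRecOn with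
  | zero => exact absurd hxs (iteratedDerivedSet_zero (s := s) ▸ hxa)
  | add_one a ih => exact by_cases (fun hx : x ∈ sᵈ[a] => ⟨a, hx, hxa⟩) ih
  | limit a ha ih =>
    rw [iteratedDerivedSet_limit ha, Set.mem_iInter, not_forall] at hxa
    obtain ⟨⟨c, hc⟩, hxc⟩ := hxa
    exact ih c hc hxc

theorem existsUnique_mem_diff_iteratedDerivedSet_succ {x : X} {a : Ordinal.{u}} (hxs : x ∈ s)
    (hxa : x ∉ sᵈ[a]) : ∃! b : Ordinal.{u}, x ∈ sᵈ[b] \ sᵈ[b + 1] := by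
  obtain ⟨b, hb⟩ := exists_mem_diff_iteratedDerivedSet_succ hxs hxa
  refine ⟨b, hb, fun c hc => le_antisymm ?_ ?_⟩ <;> by_contra! hlt
  · exact hb.2 (iteratedDerivedSet_antitone s (Order.add_one_le_of_lt hlt) hc.1)
  · exact hc.2 (iteratedDerivedSet_antitone s (Order.add_one_le_of_lt hlt) hb.1)

end CantorBendixson

/-- If `X` is a countable compact Hausdorff space, then some transfinite derived set
`D^α(X)` is empty, and consequently every point has a well-defined Cantor–Bendixson
rank: there is a unique ordinal `β` with `x ∈ D^β(X) \ D^{β+1}(X)`. -/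
theorem countable_compact_CB_rank_exists (X : Type u) [TopologicalSpace X]
    [Countable X] [CompactSpace X] [T2Space X] :
    (∃ α : Ordinal.{u}, cbIter (Set.univ : Set X) α = ∅) ∧
      ∀ x : X, ∃! β : Ordinal.{u},
        x ∈ cbIter (Set.univ : Set X) β \ cbIter (Set.univ : Set X) (β + 1) := by
  simp only [cbIter_eq_iteratedDerivedSet]
  obtain ⟨a, ha⟩ :=
    exists_iteratedDerivedSet_eq_empty (isClosed_univ : IsClosed (Set.univ : Set X))
  exact ⟨⟨a, ha⟩, fun x =>
    existsUnique_mem_diff_iteratedDerivedSet_succ (Set.mem_univ x) (ha ▸ Set.notMem_empty x)⟩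
end

section
/- For every n ≥ 1, the set L_n of normal subgroups N of F_n = FreeGroup (Fin n) such that the quotient F_n/N is fully residually free is a closed subset of G_n; consequently L_n is a compact topological space. -/
/-!
Free groups are equationally Noetherian. Sanov's matrices embed `F₂` in `SL(2, ℤ)`, so a
homomorphism `ψ : F_n → F₂` is a point of the affine `ℤ`-scheme of `n`-tuples of matrices in `SL₂`,
and `ψ g = 1` is a system of polynomial equations in its coordinates. By the Hilbert basis theorem
some finite `N₀ ⊆ N` already forces every `ψ` killing `N₀` to kill `N`. Hence `F_n / N` is fully
residually free iff for every finite `T ⊆ F_n` some `ψ : F_n → F₂` has `ker ψ ∩ T = N ∩ T`. Each such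
condition reads only the coordinates in `T`, so it is clopen in `2^{F_n}`, and `L_n` is the
intersection of these sets with the closed set `G_n` inside the compact space `2^{F_n}`.
-/

/-- The characteristic function of a subset, identifying `2^G` with `G → Bool`. -/
noncomputable def chi {G : Type*} (s : Set G) : G → Bool :=
  fun g => @decide (g ∈ s) (Classical.propDecidable _)

/-- `GnSet n` is the set of (characteristic functions of) carriers of normal
subgroups of the free group `F_n = FreeGroup (Fin n)`, viewed inside the product
space `F_n → Bool` (with `Bool` discrete). -/
def GnSet (n : ℕ) : Set (FreeGroup (Fin n) → Bool) :=
  {f | ∃ N : Subgroup (FreeGroup (Fin n)), N.Normal ∧ f = chi (N : Set (FreeGroup (Fin n)))}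

/-- A group `L` is fully residually free if for every finite subset `S ⊆ L` there
is a homomorphism `φ` to a free group of rank 2 with `φ s ≠ 1` for all `s ∈ S`, `s ≠ 1`. -/
def FullyResiduallyFree (L : Type*) [Group L] : Prop :=
  ∀ S : Finset L, ∃ φ : L →* FreeGroup (Fin 2), ∀ s ∈ S, s ≠ 1 → φ s ≠ 1

/-- `LnSet n` is the set of (characteristic functions of) normal subgroups `N` of
`F_n` such that `F_n / N` is fully residually free. -/
def LnSet (n : ℕ) : Set (FreeGroup (Fin n) → Bool) :=
  {f | ∃ N : Subgroup (FreeGroup (Fin n)), ∃ hN : N.Normal,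
    @FullyResiduallyFree (FreeGroup (Fin n) ⧸ N) (@QuotientGroup.Quotient.group _ _ N hN) ∧
      f = chi (N : Set (FreeGroup (Fin n)))}

open Matrix MatrixGroups MvPolynomial Pointwise

lemma Set.inv_smul_compl_subset_iff {G α : Type*} [Group G] [MulAction G α] {a : G}
    {X Y : Set α} : a⁻¹ • Xᶜ ⊆ Y ↔ a • Yᶜ ⊆ X := by
  rw [Set.smul_set_subset_iff_subset_inv_smul_set, inv_inv, Set.compl_subset_comm,
    ← Set.smul_set_compl]

section Sanov

lemma sq_lt_sq_add_three_mul (x y : ℤ) (hxy : x ≠ 0 ∨ y ≠ 0)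
    (h : ¬ (y ^ 2 < x ^ 2 ∧ x * y < 0)) : y ^ 2 < (x + 3 * y) ^ 2 ∧ 0 ≤ (x + 3 * y) * y := by
  rcases eq_or_ne y 0 with rfl | hy
  · simpa [sq_pos_iff] using hxy
  have hy2 : 0 < y ^ 2 := by positivity
  have : -(y ^ 2) ≤ x * y := by
    by_contra! hlt
    exact h ⟨by nlinarith [sq_nonneg (x + y), sq_nonneg (x - y)], by nlinarith⟩
  constructor <;> nlinarith [sq_nonneg (x + 3 * y - y)]

def nonzeroVectors : SubMulAction SL(2, ℤ) (Fin 2 → ℤ) where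
  carrier := {v | v ≠ 0}
  smul_mem' g _ hv := (smul_ne_zero_iff_ne g).2 hv

lemma mem_nonzeroVectors {v : Fin 2 → ℤ} : v ∈ nonzeroVectors ↔ v ≠ 0 := Iff.rfl

lemma nonzeroVectors.coord_ne_zero (v : nonzeroVectors) : v.1 0 ≠ 0 ∨ v.1 1 ≠ 0 := by
  by_contra! h
  exact v.2 (funext fun k => by fin_cases k <;> simp [h.1, h.2])

/-- Sanov uses the entry `2`; with `3` the lines `|x| = |y|` are pushed strictly inside the
ping-pong sets, which can then be cut out by strict inequalities. -/
def sanovGen : Fin 2 → SL(2, ℤ) := ![⟨!![1, 3; 0, 1], by simp⟩, ⟨!![1, 0; 3, 1], by simp⟩]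

lemma sanovGen_zero_smul (v : Fin 2 → ℤ) : sanovGen 0 • v = ![v 0 + 3 * v 1, v 1] := by
  rw [Matrix.SpecialLinearGroup.smul_def]
  ext k; fin_cases k <;> simp [sanovGen, vecHead, vecTail]

lemma sanovGen_one_smul (v : Fin 2 → ℤ) : sanovGen 1 • v = ![v 0, v 1 + 3 * v 0] := by
  rw [Matrix.SpecialLinearGroup.smul_def]
  ext k; fin_cases k <;> simp [sanovGen, vecHead, vecTail]; ring

-- In terms of the slope `x / y ∈ ℚ ∪ {∞}`, the sets `sanovX` are `(1, ∞]` and `[0, 1)`, and the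
-- sets `sanovY` are `(-∞, -1)` and `(-1, 0)`.
def sanovX : Fin 2 → Set nonzeroVectors :=
  ![{v | v.1 1 ^ 2 < v.1 0 ^ 2 ∧ 0 ≤ v.1 0 * v.1 1},
    {v | v.1 0 ^ 2 < v.1 1 ^ 2 ∧ 0 ≤ v.1 0 * v.1 1}]

def sanovY : Fin 2 → Set nonzeroVectors :=
  ![{v | v.1 1 ^ 2 < v.1 0 ^ 2 ∧ v.1 0 * v.1 1 < 0},
    {v | v.1 0 ^ 2 < v.1 1 ^ 2 ∧ v.1 0 * v.1 1 < 0}]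

lemma sanovGen_smul_compl_subset (i : Fin 2) : sanovGen i • (sanovY i)ᶜ ⊆ sanovX i := by
  rintro _ ⟨v, hv, rfl⟩
  fin_cases i
  · simpa [sanovX, sanovY, sanovGen_zero_smul] using
      sq_lt_sq_add_three_mul _ _ (nonzeroVectors.coord_ne_zero v) hv
  · simpa [sanovX, sanovY, sanovGen_one_smul, mul_comm] using
      sq_lt_sq_add_three_mul (v.1 1) (v.1 0) (nonzeroVectors.coord_ne_zero v).symm
        (by simpa [sanovY, mul_comm] using hv)

theorem injective_lift_sanovGen : Function.Injective (FreeGroup.lift sanovGen) := by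
  refine FreeGroup.injective_lift_of_ping_pong sanovGen sanovX sanovY ?_ ?_ ?_ ?_
    sanovGen_smul_compl_subset
    fun i => Set.inv_smul_compl_subset_iff.2 (sanovGen_smul_compl_subset i)
  · intro i
    fin_cases i
    · exact ⟨⟨![1, 0], mem_nonzeroVectors.2 (by simp)⟩, by simp [sanovX]⟩
    · exact ⟨⟨![0, 1], mem_nonzeroVectors.2 (by simp)⟩, by simp [sanovX]⟩
  all_goals
    intro i j
    fin_cases i <;> fin_cases j <;>
      simp [Set.disjoint_left, sanovX, sanovY] <;> intros <;> linarith

end Sanov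

/-- The coordinate ring of the scheme of homomorphisms `FreeGroup ι → SL(m)` over `R`: the
variable `X (i, k, l)` is the `(k, l)` entry of the image of the `i`-th generator. -/
abbrev SLRepRing (ι m R : Type*) [Fintype m] [DecidableEq m] [CommRing R] : Type _ :=
  MvPolynomial (ι × m × m) R ⧸
    Ideal.span (Set.range fun i : ι =>
      (Matrix.of fun k l => (X (i, k, l) : MvPolynomial (ι × m × m) R)).det - 1)

namespace SLRepRing

variable {ι m R : Type*} [Fintype m] [DecidableEq m] [CommRing R]

noncomputable def genMatrix (i : ι) : SpecialLinearGroup m (SLRepRing ι m R) :=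
  ⟨(Matrix.of fun k l => X (i, k, l)).map (Ideal.Quotient.mk _), by
    rw [← RingHom.mapMatrix_apply, ← RingHom.map_det, ← sub_eq_zero,
      ← map_one (Ideal.Quotient.mk _), ← map_sub, Ideal.Quotient.eq_zero_iff_mem]
    exact Ideal.subset_span ⟨i, rfl⟩⟩

noncomputable def univHom : FreeGroup ι →* SpecialLinearGroup m (SLRepRing ι m R) :=
  FreeGroup.lift genMatrix

noncomputable def eval (ρ : FreeGroup ι →* SpecialLinearGroup m R) : SLRepRing ι m R →+* R :=
  Ideal.Quotient.lift _ (MvPolynomial.eval fun p => ρ (FreeGroup.of p.1) p.2.1 p.2.2) <| by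
    suffices h : _ ≤ RingHom.ker
        (MvPolynomial.eval fun p : ι × m × m => ρ (FreeGroup.of p.1) p.2.1 p.2.2) from
      fun a ha => h ha
    rw [Ideal.span_le]
    rintro _ ⟨i, rfl⟩
    rw [SetLike.mem_coe, RingHom.mem_ker, map_sub, map_one, RingHom.map_det, sub_eq_zero]
    convert (ρ (FreeGroup.of i)).2
    ext k l
    simp

lemma eval_mk (ρ : FreeGroup ι →* SpecialLinearGroup m R) (p : MvPolynomial (ι × m × m) R) :
    eval ρ (Ideal.Quotient.mk _ p) =
      MvPolynomial.eval (fun p => ρ (FreeGroup.of p.1) p.2.1 p.2.2) p :=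
  Ideal.Quotient.lift_mk _ _ _

lemma map_eval_comp_univHom (ρ : FreeGroup ι →* SpecialLinearGroup m R) :
    (SpecialLinearGroup.map (eval ρ)).comp univHom = ρ := by
  ext i k l
  simp only [MonoidHom.comp_apply, univHom, FreeGroup.lift_apply_of]
  rw [Matrix.SpecialLinearGroup.map_apply_coe]
  simp [genMatrix, eval_mk]

noncomputable def relIdeal (g : FreeGroup ι) : Ideal (SLRepRing ι m R) :=
  Ideal.span (Set.range fun kl : m × m =>
    (((univHom g : SpecialLinearGroup m (SLRepRing ι m R)) : Matrix m m (SLRepRing ι m R)) - 1)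
      kl.1 kl.2)

lemma relIdeal_le_ker_eval_iff (ρ : FreeGroup ι →* SpecialLinearGroup m R) (g : FreeGroup ι) :
    relIdeal g ≤ RingHom.ker (eval ρ) ↔ ρ g = 1 := by
  have hg : (eval ρ).mapMatrix
      ((univHom g : SpecialLinearGroup m (SLRepRing ι m R)) : Matrix m m (SLRepRing ι m R)) =
        ρ g :=
    congrArg Subtype.val (DFunLike.congr_fun (map_eval_comp_univHom ρ) g)
  rw [relIdeal, Ideal.span_le, Set.range_subset_iff, Matrix.SpecialLinearGroup.ext_iff]
  simp only [Prod.forall, SetLike.mem_coe, RingHom.mem_ker]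
  refine forall₂_congr fun k l => ?_
  have hkl := congrFun (congrFun hg k) l
  rw [RingHom.mapMatrix_apply, Matrix.map_apply] at hkl
  rw [Matrix.sub_apply, map_sub, sub_eq_zero, hkl]
  rcases eq_or_ne k l with rfl | hkl <;> simp [*]

end SLRepRing

open SLRepRing in
theorem FreeGroup.exists_finset_forall_eq_one_of_injective {ι m R H : Type*} [Finite ι]
    [Fintype m] [DecidableEq m] [CommRing R] [IsNoetherianRing R] [Group H]
    {φ : H →* SpecialLinearGroup m R} (hφ : Function.Injective φ) (S : Set (FreeGroup ι)) :
    ∃ S₀ : Finset (FreeGroup ι), ↑S₀ ⊆ S ∧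
      ∀ ψ : FreeGroup ι →* H, (∀ g ∈ S₀, ψ g = 1) → ∀ g ∈ S, ψ g = 1 := by
  have hcompact : IsCompactElement (⨆ g : S, relIdeal (m := m) (R := R) g.1) :=
    (CompleteLattice.isSupFiniteCompact_iff_all_elements_compact _).1
      (CompleteLattice.WellFoundedGT.isSupFiniteCompact _) _
  obtain ⟨s, hs⟩ := CompleteLattice.IsCompactElement.exists_finset_of_le_iSup _ hcompact _ le_rfl
  refine ⟨s.map (Function.Embedding.subtype _), by simp, fun ψ hψ g hg => hφ ?_⟩
  rw [_root_.map_one, ← MonoidHom.comp_apply, ← relIdeal_le_ker_eval_iff]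
  refine (le_iSup (fun g : S => relIdeal g.1) ⟨g, hg⟩).trans (hs.trans (iSup₂_le fun h hh => ?_))
  rw [relIdeal_le_ker_eval_iff, MonoidHom.comp_apply, hψ h (Finset.mem_map_of_mem _ hh), _root_.map_one]

theorem fullyResiduallyFree_quotient_iff {ι : Type*} [Finite ι] (N : Subgroup (FreeGroup ι))
    [N.Normal] :
    FullyResiduallyFree (FreeGroup ι ⧸ N) ↔
      ∀ T : Finset (FreeGroup ι), ∃ ψ : FreeGroup ι →* FreeGroup (Fin 2),
        ∀ t ∈ T, (t ∈ N ↔ ψ t = 1) := by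
  classical
  constructor
  · intro h T
    obtain ⟨φ, hφ⟩ := h (T.image (↑))
    refine ⟨φ.comp (QuotientGroup.mk' N), fun t ht => ⟨fun htN => ?_, fun h1 => ?_⟩⟩
    · simp [(QuotientGroup.eq_one_iff t).2 htN]
    · by_contra htN
      exact hφ _ (Finset.mem_image_of_mem _ ht) ((QuotientGroup.eq_one_iff t).not.2 htN) h1
  · intro h S
    obtain ⟨N₀, hN₀, hkill⟩ :=
      FreeGroup.exists_finset_forall_eq_one_of_injective injective_lift_sanovGen (N : Set (FreeGroup ι))
    obtain ⟨ψ, hψ⟩ := h (N₀ ∪ S.image Quotient.out)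
    have hN : N ≤ ψ.ker := fun g hg =>
      hkill ψ (fun g hg => (hψ g (Finset.mem_union_left _ hg)).1 (hN₀ hg)) g hg
    refine ⟨QuotientGroup.lift N ψ hN, fun s hs hs1 => ?_⟩
    rw [← QuotientGroup.out_eq' s, QuotientGroup.lift_mk]
    rw [← QuotientGroup.out_eq' s, Ne, QuotientGroup.eq_one_iff] at hs1
    rwa [Ne, ← hψ _ (Finset.mem_union_right _ (Finset.mem_image_of_mem _ hs))]

lemma chi_eq_true {G : Type*} {s : Set G} {g : G} : chi s g = true ↔ g ∈ s := by
  simp [chi]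

lemma eqOn_chi_iff {G : Type*} {s t u : Set G} :
    Set.EqOn (chi s) (chi t) u ↔ ∀ a ∈ u, (a ∈ s ↔ a ∈ t) := by
  simp [Set.EqOn, chi]

section Topology

variable {X : Type*}

lemma isClosed_setOf_apply_imp (a c : X) :
    IsClosed {f : X → Bool | f a = true → f c = true} :=
  (isClosed_discrete {p : Bool × Bool | p.1 = true → p.2 = true}).preimage
    (f := fun φ : X → Bool => (φ a, φ c)) (by fun_prop)

lemma isClosed_setOf_apply_imp₂ (a b c : X) :
    IsClosed {f : X → Bool | f a = true → f b = true → f c = true} :=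
  (isClosed_discrete {p : Bool × Bool × Bool | p.1 = true → p.2.1 = true → p.2.2 = true}).preimage
    (f := fun φ : X → Bool => (φ a, φ b, φ c)) (by fun_prop)

lemma isClosed_setOf_exists_eqOn {Y : Type*} [TopologicalSpace Y] [DiscreteTopology Y]
    (𝒮 : Set (X → Y)) (T : Finset X) : IsClosed {f | ∃ g ∈ 𝒮, Set.EqOn f g T} := by
  have : {f | ∃ g ∈ 𝒮, Set.EqOn f g T} = T.restrict ⁻¹' (T.restrict '' 𝒮) := by
    ext f
    simp [Set.EqOn, funext_iff, eq_comm]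
  rw [this]
  exact (isClosed_discrete _).preimage (continuous_pi fun t => continuous_apply _)

end Topology

lemma isClosed_setOf_chi_normal (G : Type*) [Group G] :
    IsClosed {f : G → Bool | ∃ N : Subgroup G, N.Normal ∧ f = chi (N : Set G)} := by
  have : {f : G → Bool | ∃ N : Subgroup G, N.Normal ∧ f = chi (N : Set G)} =
      {f | f 1 = true} ∩ (⋂ (a) (b), {f | f a = true → f b = true → f (a * b) = true}) ∩
        (⋂ a, {f | f a = true → f a⁻¹ = true}) ∩
          ⋂ (a) (g), {f | f a = true → f (g * a * g⁻¹) = true} := by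
    ext f
    simp only [Set.mem_inter_iff, Set.mem_iInter, Set.mem_ofPred_eq]
    constructor
    · rintro ⟨N, hN, rfl⟩
      simp only [chi_eq_true, SetLike.mem_coe]
      exact ⟨⟨⟨N.one_mem, fun _ _ => N.mul_mem⟩, fun _ => N.inv_mem⟩,
        fun a g ha => hN.conj_mem a ha g⟩
    · rintro ⟨⟨⟨h1, hmul⟩, hinv⟩, hconj⟩
      refine ⟨⟨⟨⟨{g | f g = true}, hmul _ _⟩, h1⟩, hinv _⟩, ⟨fun a ha g => hconj a g ha⟩, ?_⟩
      funext g
      rw [Bool.eq_iff_iff, chi_eq_true]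
      rfl
  rw [this]
  exact ((isClosed_discrete {true}).preimage (continuous_apply (1 : G)) |>.inter
    (isClosed_iInter fun a => isClosed_iInter fun b => isClosed_setOf_apply_imp₂ a b _) |>.inter
    (isClosed_iInter fun a => isClosed_setOf_apply_imp a _)).inter
    (isClosed_iInter fun a => isClosed_iInter fun g => isClosed_setOf_apply_imp a _)

lemma LnSet_eq (n : ℕ) :
    LnSet n = GnSet n ∩ ⋂ T : Finset (FreeGroup (Fin n)),
      {f | ∃ g ∈ Set.range fun ψ : FreeGroup (Fin n) →* FreeGroup (Fin 2) => chi (ψ.ker : Set _),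
        Set.EqOn f g T} := by
  ext f
  simp only [LnSet, GnSet, Set.mem_inter_iff, Set.mem_iInter, Set.mem_ofPred_eq,
    Set.exists_range_iff]
  constructor
  · rintro ⟨N, hN, hfrf, rfl⟩
    refine ⟨⟨N, hN, rfl⟩, fun T => ?_⟩
    simpa [eqOn_chi_iff] using (fullyResiduallyFree_quotient_iff N).1 hfrf T
  · rintro ⟨⟨N, hN, rfl⟩, hT⟩
    refine ⟨N, hN, (fullyResiduallyFree_quotient_iff N).2 fun T => ?_, rfl⟩
    simpa [eqOn_chi_iff] using hT T

theorem LnSet_isClosed_in_GnSet_and_compact_general (n : ℕ) :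
    IsClosed (Subtype.val ⁻¹' LnSet n : Set ↥(GnSet n)) ∧ IsCompact (LnSet n) := by
  have hclosed : IsClosed (LnSet n) := by
    rw [LnSet_eq]
    exact (isClosed_setOf_chi_normal _).inter
      (isClosed_iInter fun T => isClosed_setOf_exists_eqOn _ T)
  exact ⟨hclosed.preimage continuous_subtype_val, hclosed.isCompact⟩

/-- `L_n` is closed in `G_n` (with the subspace topology); consequently `L_n` is
a compact topological space. -/
theorem LnSet_isClosed_in_GnSet_and_compact (n : ℕ) (hn : 1 ≤ n) :
    IsClosed (Subtype.val ⁻¹' LnSet n : Set ↥(GnSet n)) ∧ IsCompact (LnSet n) :=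
  LnSet_isClosed_in_GnSet_and_compact_general n
end
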